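/- arXiv:1909.05899 — 2 statements merged into one kernel-verified Lean document; each statement's English description precedes it below -/
import Mathlib

section
/- Let $m \geq 0$ be a real number and let $m_2, m_3, m_4, m_7, m_5, m_9$ be nonnegative real numbers with $m_3 \leq m_2$, $m_7 \leq m_4$, $m_5 \leq m_9$, satisfying the pair bounds $m_2+m_3 \leq m$, $m_4+m_7 \leq m$, $m_5+m_9 \leq m$, and the giant bound $m_2+m_4+m_9 \leq 1$. Then $m_2^2+m_3^2+m_4^2+m_7^2+m_5^2+m_9^2 \leq m$. -/
theorem sq_add_sq_le_mul_of_add_le {α : Type*} [CommSemiring α] [PartialOrder α] [IsOrderedRing α]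
    {a b m : α} (hb : 0 ≤ b) (hba : b ≤ a) (hab : a + b ≤ m) : a ^ 2 + b ^ 2 ≤ a * m :=
  calc a ^ 2 + b ^ 2 ≤ a ^ 2 + a * b := by
        gcongr
        rw [sq]
        exact mul_le_mul_of_nonneg_right hba hb
    _ = a * (a + b) := by ring
    _ ≤ a * m := mul_le_mul_of_nonneg_left hab (hb.trans hba)

theorem giants_estimate_general
    (m : ℝ) (hm : 0 ≤ m)
    (m₂ m₃ m₄ m₇ m₅ m₉ : ℝ)
    (h₃ : 0 ≤ m₃) (h₇ : 0 ≤ m₇) (h₅ : 0 ≤ m₅)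
    (g₁ : m₃ ≤ m₂) (g₂ : m₇ ≤ m₄) (g₃ : m₅ ≤ m₉)
    (p₁ : m₂ + m₃ ≤ m) (p₂ : m₄ + m₇ ≤ m) (p₃ : m₅ + m₉ ≤ m)
    (giants : m₂ + m₄ + m₉ ≤ 1) :
    m₂ ^ 2 + m₃ ^ 2 + m₄ ^ 2 + m₇ ^ 2 + m₅ ^ 2 + m₉ ^ 2 ≤ m := by
  have pair₁ := sq_add_sq_le_mul_of_add_le h₃ g₁ p₁
  have pair₂ := sq_add_sq_le_mul_of_add_le h₇ g₂ p₂
  have pair₃ := sq_add_sq_le_mul_of_add_le h₅ g₃ ((add_comm m₉ m₅).trans_le p₃)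
  calc m₂ ^ 2 + m₃ ^ 2 + m₄ ^ 2 + m₇ ^ 2 + m₅ ^ 2 + m₉ ^ 2 ≤ (m₂ + m₄ + m₉) * m := by
        linarith
    _ ≤ 1 * m := mul_le_mul_of_nonneg_right giants hm
    _ = m := one_mul m

theorem giants_estimate
    (m : ℝ) (hm : 0 ≤ m)
    (m₂ m₃ m₄ m₇ m₅ m₉ : ℝ)
    (h₂ : 0 ≤ m₂) (h₃ : 0 ≤ m₃) (h₄ : 0 ≤ m₄) (h₇ : 0 ≤ m₇) (h₅ : 0 ≤ m₅) (h₉ : 0 ≤ m₉)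
    (g₁ : m₃ ≤ m₂) (g₂ : m₇ ≤ m₄) (g₃ : m₅ ≤ m₉)
    (p₁ : m₂ + m₃ ≤ m) (p₂ : m₄ + m₇ ≤ m) (p₃ : m₅ + m₉ ≤ m)
    (giants : m₂ + m₄ + m₉ ≤ 1) :
    m₂ ^ 2 + m₃ ^ 2 + m₄ ^ 2 + m₇ ^ 2 + m₅ ^ 2 + m₉ ^ 2 ≤ m :=
  giants_estimate_general m hm m₂ m₃ m₄ m₇ m₅ m₉ h₃ h₇ h₅ g₁ g₂ g₃ p₁ p₂ p₃ giants
end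

section
/- Let $\varepsilon \in \mathbb{C}$ be a primitive cube root of unity and consider the nine lines in $\mathbb{P}^2(\mathbb{C})$ given by the linear forms $x - \varepsilon^c y$, $y - \varepsilon^c z$, $z - \varepsilon^c x$ for $c \in \{0,1,2\}$ (the linear factors of $(x^3-y^3)(y^3-z^3)(z^3-x^3)$). Then the set of points of $\mathbb{P}^2(\mathbb{C})$ lying on at least two of these nine lines has exactly $12$ elements, namely the nine points $(\varepsilon^a : \varepsilon^b : 1)$ with $a, b \in \{0,1,2\}$ together with the three coordinate points $(1:0:0)$, $(0:1:0)$, $(0:0:1)$. -/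
/-- The nine linear forms `x - ε^c y`, `y - ε^c z`, `z - ε^c x` (for `c ∈ {0,1,2}`),
the linear factors of the Fermat polynomial `(x³-y³)(y³-z³)(z³-x³)`,
evaluated at a vector `v ∈ ℂ³`. The first index selects the type of form,
the second index is the exponent `c`. -/
def fermatForm (ε : ℂ) (p : Fin 3 × Fin 3) (v : Fin 3 → ℂ) : ℂ :=
  ![v 0 - ε ^ (p.2 : ℕ) * v 1,
    v 1 - ε ^ (p.2 : ℕ) * v 2,
    v 2 - ε ^ (p.2 : ℕ) * v 0] p.1

/-- A point of `ℙ²(ℂ)` lies on the line cut out by the `p`-th linear form of the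
dual Hesse arrangement if the form vanishes on a (hence any) representing vector. -/
def onFermatLine (ε : ℂ) (p : Fin 3 × Fin 3) (P : Projectivization ℂ (Fin 3 → ℂ)) : Prop :=
  fermatForm ε p P.rep = 0


/-! A point `(x₀ : x₁ : x₂)` lies on one of the three lines `x_i = ε^c x_{i+1}` of type `i`
exactly when `x_i³ = x_{i+1}³`, and on two of them only when `x_i = x_{i+1} = 0`. So two lines
of the same type meet in a coordinate point, while lines of two different types cover all three
consecutive pairs and force `x₀³ = x₁³ = x₂³ ≠ 0`, that is `(x₀ : x₁ : x₂) = (ε^a : ε^b : 1)`.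
Conversely each of these twelve distinct points lies on two of the lines. -/

open Function Set Projectivization
open scoped LinearAlgebra.Projectivization

theorem IsPrimitiveRoot.pow_fin_injective {M : Type*} [CommMonoid M] {ε : M} {n : ℕ}
    (hε : IsPrimitiveRoot ε n) : Injective fun c : Fin n => ε ^ (c : ℕ) :=
  fun c d h => Fin.ext (hε.pow_inj c.isLt d.isLt h)

theorem IsPrimitiveRoot.exists_eq_pow_mul_iff_pow_eq_pow {K : Type*} [Field K] {ε : K} {n : ℕ}
    [NeZero n] (hε : IsPrimitiveRoot ε n) {x y : K} :
    (∃ c : Fin n, x = ε ^ (c : ℕ) * y) ↔ x ^ n = y ^ n := by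
  constructor
  · rintro ⟨c, rfl⟩
    rw [mul_pow, pow_right_comm, hε.pow_eq_one, one_pow, one_mul]
  · intro h
    by_cases hy : y = 0
    · subst hy
      exact ⟨0, by simpa [NeZero.ne n] using h⟩
    · obtain ⟨c, hc, hεc⟩ := hε.eq_pow_of_pow_eq_one (ξ := x / y)
        (by rw [div_pow, h, div_self (pow_ne_zero n hy)])
      exact ⟨⟨c, hc⟩, by rw [hεc, div_mul_cancel₀ x hy]⟩

theorem Fin.apply_eq_apply_two_of_apply_eq_apply_add_one {α : Type*} {w : Fin 3 → α} {i j : Fin 3}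
    (hij : i ≠ j) (hi : w i = w (i + 1)) (hj : w j = w (j + 1)) (k : Fin 3) : w k = w 2 := by
  fin_cases i <;> fin_cases j <;> fin_cases k <;> simp_all

namespace DualHesse

section CoordPoint

variable (K : Type*) {ι : Type*} [DivisionRing K] [DecidableEq ι]

noncomputable def coordPoint (k : ι) : ℙ K (ι → K) :=
  mk K (Pi.single k 1) (by simp)

variable {K}

theorem mk_eq_coordPoint {v : ι → K} (hv : v ≠ 0) {k : ι} (h : ∀ l ≠ k, v l = 0) :
    mk K v hv = coordPoint K k := by
  rw [coordPoint, mk_eq_mk_iff']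
  refine ⟨v k, funext fun l => ?_⟩
  by_cases hl : l = k
  · subst hl; simp
  · simp [Pi.single_eq_of_ne hl, h l hl]

theorem coordPoint_injective : Injective (coordPoint K : ι → ℙ K (ι → K)) := by
  intro k l h
  obtain ⟨a, ha⟩ := (mk_eq_mk_iff' K _ _ _ _).1 h
  by_contra hkl
  simpa [Pi.single_eq_of_ne hkl] using congrFun ha k

theorem range_coordPoint_fin_three :
    range (coordPoint K : Fin 3 → ℙ K (Fin 3 → K)) =
      {mk K ![1, 0, 0] (by intro h; simpa using congrFun h 0),
       mk K ![0, 1, 0] (by intro h; simpa using congrFun h 1),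
       mk K ![0, 0, 1] (by intro h; simpa using congrFun h 2)} := by
  have h0 : (Pi.single 0 1 : Fin 3 → K) = ![1, 0, 0] := by ext i; fin_cases i <;> simp
  have h1 : (Pi.single 1 1 : Fin 3 → K) = ![0, 1, 0] := by ext i; fin_cases i <;> simp
  have h2 : (Pi.single 2 1 : Fin 3 → K) = ![0, 0, 1] := by ext i; fin_cases i <;> simp
  ext P
  simp [Fin.exists_fin_succ, coordPoint, eq_comm, h0, h1, h2]

end CoordPoint

section HessePoint

variable {K : Type*} [Field K] {ε : K}

noncomputable def hessePoint (ε : K) (a b : Fin 3) : ℙ K (Fin 3 → K) :=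
  mk K ![ε ^ (a : ℕ), ε ^ (b : ℕ), 1] (by intro h; simpa using congrFun h 2)

theorem hessePoint_injective (hε : IsPrimitiveRoot ε 3) : Injective (uncurry (hessePoint ε)) := by
  rintro ⟨a, b⟩ ⟨a', b'⟩ h
  obtain ⟨t, ht⟩ := (mk_eq_mk_iff' K _ _ _ _).1 h
  have ht1 : t = 1 := by simpa using congrFun ht 2
  have ha := congrFun ht 0
  have hb := congrFun ht 1
  simp only [ht1, one_smul, Matrix.cons_val_zero, Matrix.cons_val_one] at ha hb
  rw [hε.pow_fin_injective ha, hε.pow_fin_injective hb]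

theorem hessePoint_ne_coordPoint (hε : ε ≠ 0) (a b k : Fin 3) :
    hessePoint ε a b ≠ coordPoint K k := by
  intro h
  obtain ⟨t, ht⟩ := (mk_eq_mk_iff' K _ _ _ _).1 h.symm
  have hk := congrFun ht k
  have hk1 := congrFun ht (k + 1)
  fin_cases k <;> simp_all [pow_ne_zero _ hε]

theorem mk_mem_range_hessePoint (hε : IsPrimitiveRoot ε 3) {v : Fin 3 → K} (hv : v ≠ 0)
    (h : ∀ k, v k ^ 3 = v 2 ^ 3) : mk K v hv ∈ range (uncurry (hessePoint ε)) := by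
  have h2 : v 2 ≠ 0 := by
    intro h2
    exact hv (funext fun k => pow_eq_zero_iff three_ne_zero |>.1 (by rw [h k, h2]; ring))
  obtain ⟨a, ha⟩ := hε.exists_eq_pow_mul_iff_pow_eq_pow.2 (h 0)
  obtain ⟨b, hb⟩ := hε.exists_eq_pow_mul_iff_pow_eq_pow.2 (h 1)
  refine ⟨(a, b), ((mk_eq_mk_iff' K _ _ _ _).2 ⟨v 2, funext fun k => ?_⟩).symm⟩
  fin_cases k <;> simp [ha, hb, mul_comm]

end HessePoint

section FermatLines

variable {ε : ℂ}

theorem fermatForm_apply (i c : Fin 3) (v : Fin 3 → ℂ) :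
    fermatForm ε (i, c) v = v i - ε ^ (c : ℕ) * v (i + 1) := by
  fin_cases i <;> rfl

theorem onFermatLine_mk_iff {v : Fin 3 → ℂ} (hv : v ≠ 0) {i c : Fin 3} :
    onFermatLine ε (i, c) (mk ℂ v hv) ↔ v i = ε ^ (c : ℕ) * v (i + 1) := by
  obtain ⟨t, ht⟩ := exists_smul_eq_mk_rep ℂ v hv
  rw [onFermatLine, fermatForm_apply, ← ht, sub_eq_zero]
  simp only [Pi.smul_apply, Units.smul_def, smul_eq_mul, mul_left_comm _ (t : ℂ)]
  exact mul_right_inj' t.ne_zero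

theorem exists_onFermatLine_iff (hε : IsPrimitiveRoot ε 3) {v : Fin 3 → ℂ} (hv : v ≠ 0)
    (i : Fin 3) : (∃ c, onFermatLine ε (i, c) (mk ℂ v hv)) ↔ v i ^ 3 = v (i + 1) ^ 3 := by
  simp only [onFermatLine_mk_iff]
  exact hε.exists_eq_pow_mul_iff_pow_eq_pow

theorem eq_coordPoint_of_onFermatLine (hε : IsPrimitiveRoot ε 3) {v : Fin 3 → ℂ} (hv : v ≠ 0)
    {i c d : Fin 3} (hcd : c ≠ d) (hc : onFermatLine ε (i, c) (mk ℂ v hv))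
    (hd : onFermatLine ε (i, d) (mk ℂ v hv)) : mk ℂ v hv = coordPoint ℂ (i + 2) := by
  rw [onFermatLine_mk_iff] at hc hd
  have h1 : v (i + 1) = 0 := by
    by_contra h
    exact hcd (hε.pow_fin_injective (mul_right_cancel₀ h (hc.symm.trans hd)))
  have h0 : v i = 0 := by rw [hc, h1, mul_zero]
  have hcover : ∀ i l : Fin 3, l ≠ i + 2 → l = i ∨ l = i + 1 := by decide
  refine mk_eq_coordPoint hv fun l hl => ?_
  obtain rfl | rfl := hcover i l hl
  exacts [h0, h1]

theorem mk_mem_range_hessePoint_of_onFermatLine (hε : IsPrimitiveRoot ε 3) {v : Fin 3 → ℂ}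
    (hv : v ≠ 0) {i j c d : Fin 3} (hij : i ≠ j) (hc : onFermatLine ε (i, c) (mk ℂ v hv))
    (hd : onFermatLine ε (j, d) (mk ℂ v hv)) : mk ℂ v hv ∈ range (uncurry (hessePoint ε)) :=
  mk_mem_range_hessePoint hε hv <| Fin.apply_eq_apply_two_of_apply_eq_apply_add_one (w := (v · ^ 3))
    hij ((exists_onFermatLine_iff hε hv i).1 ⟨c, hc⟩) ((exists_onFermatLine_iff hε hv j).1 ⟨d, hd⟩)

theorem two_le_ncard_onFermatLine_hessePoint (hε : IsPrimitiveRoot ε 3) (a b : Fin 3) :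
    2 ≤ {p | onFermatLine ε p (hessePoint ε a b)}.ncard := by
  have hcube : ∀ k : ℕ, (ε ^ k) ^ 3 = 1 := fun k => by
    rw [pow_right_comm, hε.pow_eq_one, one_pow]
  obtain ⟨c, hc⟩ := (exists_onFermatLine_iff hε (v := ![ε ^ (a : ℕ), ε ^ (b : ℕ), 1]) _ 0).2
    (by simp [hcube])
  refine (one_lt_ncard_iff (toFinite _)).2 ⟨(0, c), (1, b), hc, ?_, by simp⟩
  simp [hessePoint, onFermatLine_mk_iff]

theorem two_le_ncard_onFermatLine_coordPoint (k : Fin 3) :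
    2 ≤ {p | onFermatLine ε p (coordPoint ℂ k)}.ncard := by
  have hk : ∀ c : Fin 3, onFermatLine ε (k + 1, c) (coordPoint ℂ k) := by
    intro c
    fin_cases k <;> simp [coordPoint, onFermatLine_mk_iff]
  exact (one_lt_ncard_iff (toFinite _)).2 ⟨_, _, hk 0, hk 1, by simp⟩

theorem setOf_two_le_ncard_onFermatLine (hε : IsPrimitiveRoot ε 3) :
    {P | 2 ≤ {p | onFermatLine ε p P}.ncard} =
      range (uncurry (hessePoint ε)) ∪ range (coordPoint ℂ) := by
  ext P
  induction P using Projectivization.ind with | h v hv => ?_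
  constructor
  · intro h
    obtain ⟨⟨i, c⟩, ⟨j, d⟩, hc, hd, hcd⟩ := (one_lt_ncard_iff (toFinite _)).1 h
    by_cases hij : i = j
    · subst hij
      exact Or.inr ⟨i + 2, (eq_coordPoint_of_onFermatLine hε hv (by simpa using hcd) hc hd).symm⟩
    · exact Or.inl (mk_mem_range_hessePoint_of_onFermatLine hε hv hij hc hd)
  · rintro (⟨⟨a, b⟩, hab⟩ | ⟨k, hk⟩)
    · rw [← hab]
      exact two_le_ncard_onFermatLine_hessePoint hε a b
    · rw [← hk]
      exact two_le_ncard_onFermatLine_coordPoint k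

end FermatLines

end DualHesse

open DualHesse

theorem dual_hesse_singular_points (ε : ℂ) (hε : IsPrimitiveRoot ε 3) :
    {P : Projectivization ℂ (Fin 3 → ℂ) |
        2 ≤ Set.ncard {p : Fin 3 × Fin 3 | onFermatLine ε p P}} =
      ({P : Projectivization ℂ (Fin 3 → ℂ) | ∃ a b : Fin 3,
          P = Projectivization.mk ℂ ![ε ^ (a : ℕ), ε ^ (b : ℕ), 1]
                (by intro h; simpa using congrFun h 2)} ∪
        {Projectivization.mk ℂ ![1, 0, 0] (by intro h; simpa using congrFun h 0),
         Projectivization.mk ℂ ![0, 1, 0] (by intro h; simpa using congrFun h 1),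
         Projectivization.mk ℂ ![0, 0, 1] (by intro h; simpa using congrFun h 2)}) ∧
    Set.ncard {P : Projectivization ℂ (Fin 3 → ℂ) |
        2 ≤ Set.ncard {p : Fin 3 × Fin 3 | onFermatLine ε p P}} = 12 := by
  rw [setOf_two_le_ncard_onFermatLine hε]
  refine ⟨?_, ?_⟩
  · rw [← range_coordPoint_fin_three]
    congr 1
    ext P
    simp [hessePoint, eq_comm]
  · have hinj := (hessePoint_injective hε).sumElim coordPoint_injective
      fun ab k => hessePoint_ne_coordPoint (hε.ne_zero three_ne_zero) ab.1 ab.2 k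
    rw [← Sum.elim_range, ncard_range_of_injective hinj]
    simp
end
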